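/- Under the two-element tensor-product SBP–SAT setting, assume M_Γ is symmetric positive semidefinite and σ ≥ 0 (no accuracy conditions on R_L^{1D}, R_R^{1D} are required). Let u_L(t), u_R(t) be differentiable curves solving the semi-discrete scheme. Then the time derivative of the total discrete energy satisfies the exact identity J_L u_Lᵀ H_L u_L'(t) + J_R u_Rᵀ H_R u_R'(t) = (λ/2)( u_Lᵀ E_{ξ1,L} u_L − u_Rᵀ E_{ξN,R} u_R ) − (λ_η/2)( u_Lᵀ (E_{ηN,L} − E_{η1,L}) u_L + u_Rᵀ (E_{ηN,R} − E_{η1,R}) u_R ) − (σ|λ|/2) (R_L u_L − R_R u_R)ᵀ M_Γ (R_L u_L − R_R u_R). In particular, the interface/SAT contribution −(σ|λ|/2)(R_L u_L − R_R u_R)ᵀ M_Γ (R_L u_L − R_R u_R) is ≤ 0, so the non-conforming coupling is energy stable, and for the central flux σ = 0 it contributes exactly zero (energy conservation at the interface). -/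

import Mathlib

open Matrix
open scoped Kronecker

noncomputable section

/-- Boundary matrix `e_i e_iᵀ` built from the `i`-th standard basis vector. -/
def bmat {n : ℕ} (i : Fin n) : Matrix (Fin n) (Fin n) ℝ :=
  vecMulVec (Pi.single i 1) (Pi.single i 1)

/-- Two-dimensional projection `e_iᵀ ⊗ R1` onto the intermediate interface grid:
it restricts the solution to the face `ξ`-index `i` and applies the
one-dimensional projection `R1`. -/
def proj2D {nx ny NΓ : ℕ} (i : Fin nx) (R1 : Matrix (Fin NΓ) (Fin ny) ℝ) :
    Matrix (Fin NΓ) (Fin nx × Fin ny) ℝ :=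
  Matrix.of fun g q => (if q.1 = i then 1 else 0) * R1 g q.2



/-! Multiplying each element's scheme by `uᵀ`, the SBP property `Q + Qᵀ = E_N − E_1`
turns the volume terms into boundary terms. On the interface the central parts of the
two SAT fluxes cancel because `M_Γ` is symmetric, and the penalty parts combine into
`−(σ|λ|/2) (R_L u_L − R_R u_R)ᵀ M_Γ (R_L u_L − R_R u_R)`, which is `≤ 0` since `M_Γ ⪰ 0`. -/

namespace Matrix

variable {R : Type*} [CommRing R] {ι κ γ : Type*}

theorem sub_kronecker (A₁ A₂ : Matrix ι κ R) (B : Matrix γ γ R) :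
    (A₁ - A₂) ⊗ₖ B = A₁ ⊗ₖ B - A₂ ⊗ₖ B :=
  ext fun _ _ => sub_mul _ _ _

theorem kronecker_sub (A : Matrix γ γ R) (B₁ B₂ : Matrix ι κ R) :
    A ⊗ₖ (B₁ - B₂) = A ⊗ₖ B₁ - A ⊗ₖ B₂ :=
  ext fun _ _ => mul_sub _ _ _

theorem kronecker_add_transpose_of_isSymm_right {Q A B : Matrix ι ι R} {H : Matrix κ κ R}
    (hH : H.IsSymm) (hQ : Q + Qᵀ = A - B) : Q ⊗ₖ H + (Q ⊗ₖ H)ᵀ = A ⊗ₖ H - B ⊗ₖ H := by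
  rw [← kroneckerMap_transpose, hH.eq, ← add_kronecker, hQ, sub_kronecker]

theorem kronecker_add_transpose_of_isSymm_left {Q A B : Matrix ι ι R} {H : Matrix κ κ R}
    (hH : H.IsSymm) (hQ : Q + Qᵀ = A - B) : H ⊗ₖ Q + (H ⊗ₖ Q)ᵀ = H ⊗ₖ A - H ⊗ₖ B := by
  rw [← kroneckerMap_transpose, hH.eq, ← kronecker_add, hQ, kronecker_sub]

theorem dotProduct_add_transpose_mulVec_self [Fintype ι] (A : Matrix ι ι R) (u : ι → R) :
    u ⬝ᵥ (A + Aᵀ) *ᵥ u = 2 * (u ⬝ᵥ A *ᵥ u) := by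
  rw [add_mulVec, dotProduct_add, dotProduct_transpose_mulVec]
  ring

theorem dotProduct_transpose_mulVec' [Fintype ι] [Fintype γ] (A : Matrix γ ι R) (u : ι → R)
    (v : γ → R) :
    u ⬝ᵥ Aᵀ *ᵥ v = (A *ᵥ u) ⬝ᵥ v := by
  rw [dotProduct_mulVec, vecMul_transpose]

theorem IsSymm.dotProduct_mulVec_comm [Fintype γ] {M : Matrix γ γ R} (hM : M.IsSymm)
    (a b : γ → R) : a ⬝ᵥ M *ᵥ b = b ⬝ᵥ M *ᵥ a := by
  simpa only [hM.eq] using dotProduct_transpose_mulVec M a b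

end Matrix

open Matrix

section EnergyRate

variable {ι κ γ : Type*} [Fintype ι] [Fintype κ] [Fintype γ]

theorem dotProduct_sbp_volume {Qξ Qη EξN Eξ1 EηN Eη1 : Matrix ι ι ℝ}
    (hξ : Qξ + Qξᵀ = EξN - Eξ1) (hη : Qη + Qηᵀ = EηN - Eη1) (lam lamEta : ℝ) (u : ι → ℝ) :
    u ⬝ᵥ (-(lam • (Qξ *ᵥ u)) - lamEta • (Qη *ᵥ u)) =
      -(lam / 2) * (u ⬝ᵥ ((EξN - Eξ1) *ᵥ u)) - (lamEta / 2) * (u ⬝ᵥ ((EηN - Eη1) *ᵥ u)) := by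
  rw [← hξ, ← hη, dotProduct_add_transpose_mulVec_self, dotProduct_add_transpose_mulVec_self,
    dotProduct_sub, dotProduct_neg, dotProduct_smul, dotProduct_smul, smul_eq_mul, smul_eq_mul]
  ring

theorem dotProduct_sat_interface {M : Matrix γ γ ℝ} (hM : M.IsSymm)
    (RL : Matrix γ ι ℝ) (RR : Matrix γ κ ℝ) (EN : Matrix ι ι ℝ) (E1 : Matrix κ κ ℝ)
    (lam c : ℝ) (uL : ι → ℝ) (uR : κ → ℝ) :
    uL ⬝ᵥ (lam • (EN *ᵥ uL) - ((lam / 2) • (EN *ᵥ uL + RLᵀ *ᵥ (M *ᵥ (RR *ᵥ uR)))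
        - c • (RLᵀ *ᵥ (M *ᵥ (RR *ᵥ uR)) - RLᵀ *ᵥ (M *ᵥ (RL *ᵥ uL)))))
      - uR ⬝ᵥ (lam • (E1 *ᵥ uR) - ((lam / 2) • (E1 *ᵥ uR + RRᵀ *ᵥ (M *ᵥ (RL *ᵥ uL)))
        - c • (RRᵀ *ᵥ (M *ᵥ (RR *ᵥ uR)) - RRᵀ *ᵥ (M *ᵥ (RL *ᵥ uL))))) =
      (lam / 2) * (uL ⬝ᵥ (EN *ᵥ uL) - uR ⬝ᵥ (E1 *ᵥ uR))
        - c * ((RL *ᵥ uL - RR *ᵥ uR) ⬝ᵥ (M *ᵥ (RL *ᵥ uL - RR *ᵥ uR))) := by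
  have hcomm := hM.dotProduct_mulVec_comm (RL *ᵥ uL) (RR *ᵥ uR)
  simp only [dotProduct_sub, dotProduct_add, dotProduct_smul, smul_eq_mul,
    dotProduct_transpose_mulVec', mulVec_sub, sub_dotProduct]
  linear_combination (-lam / 2) * hcomm

end EnergyRate

theorem nonconforming_energy_stability_general
    {nxL nyL nxR nyR NΓ : ℕ}
    -- one-dimensional SBP operators on each element
    (HxL : Matrix (Fin (nxL + 1)) (Fin (nxL + 1)) ℝ)
    (HyL : Matrix (Fin (nyL + 1)) (Fin (nyL + 1)) ℝ)
    (HxR : Matrix (Fin (nxR + 1)) (Fin (nxR + 1)) ℝ)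
    (HyR : Matrix (Fin (nyR + 1)) (Fin (nyR + 1)) ℝ)
    (QxL : Matrix (Fin (nxL + 1)) (Fin (nxL + 1)) ℝ)
    (QyL : Matrix (Fin (nyL + 1)) (Fin (nyL + 1)) ℝ)
    (QxR : Matrix (Fin (nxR + 1)) (Fin (nxR + 1)) ℝ)
    (QyR : Matrix (Fin (nyR + 1)) (Fin (nyR + 1)) ℝ)
    (hHxLd : HxL.IsDiag)
    (hHyLd : HyL.IsDiag)
    (hHxRd : HxR.IsDiag)
    (hHyRd : HyR.IsDiag)
    (hQxL : QxL + QxLᵀ = bmat (Fin.last nxL) - bmat 0)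
    (hQyL : QyL + QyLᵀ = bmat (Fin.last nyL) - bmat 0)
    (hQxR : QxR + QxRᵀ = bmat (Fin.last nxR) - bmat 0)
    (hQyR : QyR + QyRᵀ = bmat (Fin.last nyR) - bmat 0)
    -- intermediate interface grid
    (MΓ : Matrix (Fin NΓ) (Fin NΓ) ℝ) (hMΓ : MΓ.PosSemidef)
    -- two-dimensional operators as Kronecker products
    (HL : Matrix (Fin (nxL + 1) × Fin (nyL + 1)) (Fin (nxL + 1) × Fin (nyL + 1)) ℝ)
    (QξL : Matrix (Fin (nxL + 1) × Fin (nyL + 1)) (Fin (nxL + 1) × Fin (nyL + 1)) ℝ)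
    (hQξL : QξL = QxL ⊗ₖ HyL)
    (QηL : Matrix (Fin (nxL + 1) × Fin (nyL + 1)) (Fin (nxL + 1) × Fin (nyL + 1)) ℝ)
    (hQηL : QηL = HxL ⊗ₖ QyL)
    (ExNL : Matrix (Fin (nxL + 1) × Fin (nyL + 1)) (Fin (nxL + 1) × Fin (nyL + 1)) ℝ)
    (hExNL : ExNL = bmat (Fin.last nxL) ⊗ₖ HyL)
    (Ex1L : Matrix (Fin (nxL + 1) × Fin (nyL + 1)) (Fin (nxL + 1) × Fin (nyL + 1)) ℝ)
    (hEx1L : Ex1L = bmat 0 ⊗ₖ HyL)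
    (EyNL : Matrix (Fin (nxL + 1) × Fin (nyL + 1)) (Fin (nxL + 1) × Fin (nyL + 1)) ℝ)
    (hEyNL : EyNL = HxL ⊗ₖ bmat (Fin.last nyL))
    (Ey1L : Matrix (Fin (nxL + 1) × Fin (nyL + 1)) (Fin (nxL + 1) × Fin (nyL + 1)) ℝ)
    (hEy1L : Ey1L = HxL ⊗ₖ bmat 0)
    (HR : Matrix (Fin (nxR + 1) × Fin (nyR + 1)) (Fin (nxR + 1) × Fin (nyR + 1)) ℝ)
    (QξR : Matrix (Fin (nxR + 1) × Fin (nyR + 1)) (Fin (nxR + 1) × Fin (nyR + 1)) ℝ)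
    (hQξR : QξR = QxR ⊗ₖ HyR)
    (QηR : Matrix (Fin (nxR + 1) × Fin (nyR + 1)) (Fin (nxR + 1) × Fin (nyR + 1)) ℝ)
    (hQηR : QηR = HxR ⊗ₖ QyR)
    (ExNR : Matrix (Fin (nxR + 1) × Fin (nyR + 1)) (Fin (nxR + 1) × Fin (nyR + 1)) ℝ)
    (hExNR : ExNR = bmat (Fin.last nxR) ⊗ₖ HyR)
    (Ex1R : Matrix (Fin (nxR + 1) × Fin (nyR + 1)) (Fin (nxR + 1) × Fin (nyR + 1)) ℝ)
    (hEx1R : Ex1R = bmat 0 ⊗ₖ HyR)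
    (EyNR : Matrix (Fin (nxR + 1) × Fin (nyR + 1)) (Fin (nxR + 1) × Fin (nyR + 1)) ℝ)
    (hEyNR : EyNR = HxR ⊗ₖ bmat (Fin.last nyR))
    (Ey1R : Matrix (Fin (nxR + 1) × Fin (nyR + 1)) (Fin (nxR + 1) × Fin (nyR + 1)) ℝ)
    (hEy1R : Ey1R = HxR ⊗ₖ bmat 0)
    -- two-dimensional projections onto the interface grid
    (RL : Matrix (Fin NΓ) (Fin (nxL + 1) × Fin (nyL + 1)) ℝ)
    (RR : Matrix (Fin NΓ) (Fin (nxR + 1) × Fin (nyR + 1)) ℝ)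
    -- wave speeds, SAT parameter, Jacobians
    (lam lamEta σ JL JR : ℝ) (hσ : 0 ≤ σ)
    -- solution curves and numerical fluxes
    (uL uL' : ℝ → Fin (nxL + 1) × Fin (nyL + 1) → ℝ)
    (uR uR' : ℝ → Fin (nxR + 1) × Fin (nyR + 1) → ℝ)
    (fL : ℝ → Fin (nxL + 1) × Fin (nyL + 1) → ℝ)
    (fR : ℝ → Fin (nxR + 1) × Fin (nyR + 1) → ℝ)
    (hfL : ∀ t, fL t =
      (lam / 2) • (ExNL *ᵥ uL t + RLᵀ *ᵥ (MΓ *ᵥ (RR *ᵥ uR t)))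
        - (σ * |lam| / 2) • (RLᵀ *ᵥ (MΓ *ᵥ (RR *ᵥ uR t)) - RLᵀ *ᵥ (MΓ *ᵥ (RL *ᵥ uL t))))
    (hfR : ∀ t, fR t =
      (lam / 2) • (Ex1R *ᵥ uR t + RRᵀ *ᵥ (MΓ *ᵥ (RL *ᵥ uL t)))
        - (σ * |lam| / 2) • (RRᵀ *ᵥ (MΓ *ᵥ (RR *ᵥ uR t)) - RRᵀ *ᵥ (MΓ *ᵥ (RL *ᵥ uL t))))
    -- the semi-discrete SBP–SAT scheme
    (hschemeL : ∀ t, JL • (HL *ᵥ uL' t) =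
      -(lam • (QξL *ᵥ uL t)) - lamEta • (QηL *ᵥ uL t) + (lam • (ExNL *ᵥ uL t) - fL t))
    (hschemeR : ∀ t, JR • (HR *ᵥ uR' t) =
      -(lam • (QξR *ᵥ uR t)) - lamEta • (QηR *ᵥ uR t) - (lam • (Ex1R *ᵥ uR t) - fR t)) :
    ∀ t : ℝ,
      (JL * (uL t ⬝ᵥ (HL *ᵥ uL' t)) + JR * (uR t ⬝ᵥ (HR *ᵥ uR' t)) =
        (lam / 2) * (uL t ⬝ᵥ (Ex1L *ᵥ uL t) - uR t ⬝ᵥ (ExNR *ᵥ uR t))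
          - (lamEta / 2) * (uL t ⬝ᵥ ((EyNL - Ey1L) *ᵥ uL t)
              + uR t ⬝ᵥ ((EyNR - Ey1R) *ᵥ uR t))
          - (σ * |lam| / 2) *
              ((RL *ᵥ uL t - RR *ᵥ uR t) ⬝ᵥ (MΓ *ᵥ (RL *ᵥ uL t - RR *ᵥ uR t))))
      ∧ (-((σ * |lam| / 2) *
            ((RL *ᵥ uL t - RR *ᵥ uR t) ⬝ᵥ (MΓ *ᵥ (RL *ᵥ uL t - RR *ᵥ uR t)))) ≤ 0)
      ∧ (σ = 0 →
          (σ * |lam| / 2) *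
            ((RL *ᵥ uL t - RR *ᵥ uR t) ⬝ᵥ (MΓ *ᵥ (RL *ᵥ uL t - RR *ᵥ uR t))) = 0) := by
  intro t
  subst hQξL hQηL hExNL hEx1L hEyNL hEy1L hQξR hQηR hExNR hEx1R hEyNR hEy1R
  have volL := dotProduct_sbp_volume (kronecker_add_transpose_of_isSymm_right hHyLd.isSymm hQxL)
    (kronecker_add_transpose_of_isSymm_left hHxLd.isSymm hQyL) lam lamEta (uL t)
  have volR := dotProduct_sbp_volume (kronecker_add_transpose_of_isSymm_right hHyRd.isSymm hQxR)
    (kronecker_add_transpose_of_isSymm_left hHxRd.isSymm hQyR) lam lamEta (uR t)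
  have sat := dotProduct_sat_interface (isHermitian_iff_isSymm.mp hMΓ.isHermitian) RL RR
    (bmat (Fin.last nxL) ⊗ₖ HyL) (bmat 0 ⊗ₖ HyR) lam (σ * |lam| / 2) (uL t) (uR t)
  rw [← hfL t, ← hfR t] at sat
  have hdiss : 0 ≤ (RL *ᵥ uL t - RR *ᵥ uR t) ⬝ᵥ (MΓ *ᵥ (RL *ᵥ uL t - RR *ᵥ uR t)) := by
    simpa using hMΓ.dotProduct_mulVec_nonneg (RL *ᵥ uL t - RR *ᵥ uR t)
  refine ⟨?_, neg_nonpos.mpr (mul_nonneg (by positivity) hdiss), fun hσ0 => by simp [hσ0]⟩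
  rw [← smul_eq_mul JL, ← smul_eq_mul JR, ← dotProduct_smul, ← dotProduct_smul, hschemeL t,
    hschemeR t, dotProduct_add, dotProduct_sub (uR t), volL, volR]
  simp only [sub_mulVec, dotProduct_sub] at sat ⊢
  linear_combination sat

/-- **Energy stability of the non-conforming SBP–SAT coupling.**
In the two-element tensor-product SBP–SAT setting, with `M_Γ` symmetric
positive semidefinite and `σ ≥ 0`, the time derivative of the total discrete
energy equals the outer-boundary terms minus the nonnegative interface
dissipation `(σ|λ|/2)(R_L u_L − R_R u_R)ᵀ M_Γ (R_L u_L − R_R u_R)`; in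
particular the interface/SAT contribution is `≤ 0` (energy stability) and
vanishes for the central flux `σ = 0` (energy conservation). -/
theorem nonconforming_energy_stability
    {nxL nyL nxR nyR NΓ : ℕ}
    -- one-dimensional SBP operators on each element
    (HxL : Matrix (Fin (nxL + 1)) (Fin (nxL + 1)) ℝ)
    (HyL : Matrix (Fin (nyL + 1)) (Fin (nyL + 1)) ℝ)
    (HxR : Matrix (Fin (nxR + 1)) (Fin (nxR + 1)) ℝ)
    (HyR : Matrix (Fin (nyR + 1)) (Fin (nyR + 1)) ℝ)
    (QxL : Matrix (Fin (nxL + 1)) (Fin (nxL + 1)) ℝ)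
    (QyL : Matrix (Fin (nyL + 1)) (Fin (nyL + 1)) ℝ)
    (QxR : Matrix (Fin (nxR + 1)) (Fin (nxR + 1)) ℝ)
    (QyR : Matrix (Fin (nyR + 1)) (Fin (nyR + 1)) ℝ)
    (hHxLd : HxL.IsDiag) (hHxLp : ∀ i, 0 < HxL i i)
    (hHyLd : HyL.IsDiag) (hHyLp : ∀ i, 0 < HyL i i)
    (hHxRd : HxR.IsDiag) (hHxRp : ∀ i, 0 < HxR i i)
    (hHyRd : HyR.IsDiag) (hHyRp : ∀ i, 0 < HyR i i)
    (hQxL : QxL + QxLᵀ = bmat (Fin.last nxL) - bmat 0)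
    (hQyL : QyL + QyLᵀ = bmat (Fin.last nyL) - bmat 0)
    (hQxR : QxR + QxRᵀ = bmat (Fin.last nxR) - bmat 0)
    (hQyR : QyR + QyRᵀ = bmat (Fin.last nyR) - bmat 0)
    (hQxL1 : QxL *ᵥ (fun _ => (1:ℝ)) = 0) (hQyL1 : QyL *ᵥ (fun _ => (1:ℝ)) = 0)
    (hQxR1 : QxR *ᵥ (fun _ => (1:ℝ)) = 0) (hQyR1 : QyR *ᵥ (fun _ => (1:ℝ)) = 0)
    -- intermediate interface grid
    (MΓ : Matrix (Fin NΓ) (Fin NΓ) ℝ) (hMΓ : MΓ.PosSemidef)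
    (RL1 : Matrix (Fin NΓ) (Fin (nyL + 1)) ℝ)
    (RR1 : Matrix (Fin NΓ) (Fin (nyR + 1)) ℝ)
    -- two-dimensional operators as Kronecker products
    (HL : Matrix (Fin (nxL + 1) × Fin (nyL + 1)) (Fin (nxL + 1) × Fin (nyL + 1)) ℝ)
    (hHL : HL = HxL ⊗ₖ HyL)
    (QξL : Matrix (Fin (nxL + 1) × Fin (nyL + 1)) (Fin (nxL + 1) × Fin (nyL + 1)) ℝ)
    (hQξL : QξL = QxL ⊗ₖ HyL)
    (QηL : Matrix (Fin (nxL + 1) × Fin (nyL + 1)) (Fin (nxL + 1) × Fin (nyL + 1)) ℝ)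
    (hQηL : QηL = HxL ⊗ₖ QyL)
    (ExNL : Matrix (Fin (nxL + 1) × Fin (nyL + 1)) (Fin (nxL + 1) × Fin (nyL + 1)) ℝ)
    (hExNL : ExNL = bmat (Fin.last nxL) ⊗ₖ HyL)
    (Ex1L : Matrix (Fin (nxL + 1) × Fin (nyL + 1)) (Fin (nxL + 1) × Fin (nyL + 1)) ℝ)
    (hEx1L : Ex1L = bmat 0 ⊗ₖ HyL)
    (EyNL : Matrix (Fin (nxL + 1) × Fin (nyL + 1)) (Fin (nxL + 1) × Fin (nyL + 1)) ℝ)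
    (hEyNL : EyNL = HxL ⊗ₖ bmat (Fin.last nyL))
    (Ey1L : Matrix (Fin (nxL + 1) × Fin (nyL + 1)) (Fin (nxL + 1) × Fin (nyL + 1)) ℝ)
    (hEy1L : Ey1L = HxL ⊗ₖ bmat 0)
    (HR : Matrix (Fin (nxR + 1) × Fin (nyR + 1)) (Fin (nxR + 1) × Fin (nyR + 1)) ℝ)
    (hHR : HR = HxR ⊗ₖ HyR)
    (QξR : Matrix (Fin (nxR + 1) × Fin (nyR + 1)) (Fin (nxR + 1) × Fin (nyR + 1)) ℝ)
    (hQξR : QξR = QxR ⊗ₖ HyR)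
    (QηR : Matrix (Fin (nxR + 1) × Fin (nyR + 1)) (Fin (nxR + 1) × Fin (nyR + 1)) ℝ)
    (hQηR : QηR = HxR ⊗ₖ QyR)
    (ExNR : Matrix (Fin (nxR + 1) × Fin (nyR + 1)) (Fin (nxR + 1) × Fin (nyR + 1)) ℝ)
    (hExNR : ExNR = bmat (Fin.last nxR) ⊗ₖ HyR)
    (Ex1R : Matrix (Fin (nxR + 1) × Fin (nyR + 1)) (Fin (nxR + 1) × Fin (nyR + 1)) ℝ)
    (hEx1R : Ex1R = bmat 0 ⊗ₖ HyR)
    (EyNR : Matrix (Fin (nxR + 1) × Fin (nyR + 1)) (Fin (nxR + 1) × Fin (nyR + 1)) ℝ)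
    (hEyNR : EyNR = HxR ⊗ₖ bmat (Fin.last nyR))
    (Ey1R : Matrix (Fin (nxR + 1) × Fin (nyR + 1)) (Fin (nxR + 1) × Fin (nyR + 1)) ℝ)
    (hEy1R : Ey1R = HxR ⊗ₖ bmat 0)
    -- two-dimensional projections onto the interface grid
    (RL : Matrix (Fin NΓ) (Fin (nxL + 1) × Fin (nyL + 1)) ℝ)
    (hRL : RL = proj2D (Fin.last nxL) RL1)
    (RR : Matrix (Fin NΓ) (Fin (nxR + 1) × Fin (nyR + 1)) ℝ)
    (hRR : RR = proj2D 0 RR1)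
    -- wave speeds, SAT parameter, Jacobians
    (lam lamEta σ JL JR : ℝ) (hσ : 0 ≤ σ) (hJL : 0 < JL) (hJR : 0 < JR)
    -- solution curves and numerical fluxes
    (uL uL' : ℝ → Fin (nxL + 1) × Fin (nyL + 1) → ℝ)
    (uR uR' : ℝ → Fin (nxR + 1) × Fin (nyR + 1) → ℝ)
    (huL : ∀ t, HasDerivAt uL (uL' t) t)
    (huR : ∀ t, HasDerivAt uR (uR' t) t)
    (fL : ℝ → Fin (nxL + 1) × Fin (nyL + 1) → ℝ)
    (fR : ℝ → Fin (nxR + 1) × Fin (nyR + 1) → ℝ)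
    (hfL : ∀ t, fL t =
      (lam / 2) • (ExNL *ᵥ uL t + RLᵀ *ᵥ (MΓ *ᵥ (RR *ᵥ uR t)))
        - (σ * |lam| / 2) • (RLᵀ *ᵥ (MΓ *ᵥ (RR *ᵥ uR t)) - RLᵀ *ᵥ (MΓ *ᵥ (RL *ᵥ uL t))))
    (hfR : ∀ t, fR t =
      (lam / 2) • (Ex1R *ᵥ uR t + RRᵀ *ᵥ (MΓ *ᵥ (RL *ᵥ uL t)))
        - (σ * |lam| / 2) • (RRᵀ *ᵥ (MΓ *ᵥ (RR *ᵥ uR t)) - RRᵀ *ᵥ (MΓ *ᵥ (RL *ᵥ uL t))))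
    -- the semi-discrete SBP–SAT scheme
    (hschemeL : ∀ t, JL • (HL *ᵥ uL' t) =
      -(lam • (QξL *ᵥ uL t)) - lamEta • (QηL *ᵥ uL t) + (lam • (ExNL *ᵥ uL t) - fL t))
    (hschemeR : ∀ t, JR • (HR *ᵥ uR' t) =
      -(lam • (QξR *ᵥ uR t)) - lamEta • (QηR *ᵥ uR t) - (lam • (Ex1R *ᵥ uR t) - fR t)) :
    ∀ t : ℝ,
      (JL * (uL t ⬝ᵥ (HL *ᵥ uL' t)) + JR * (uR t ⬝ᵥ (HR *ᵥ uR' t)) =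
        (lam / 2) * (uL t ⬝ᵥ (Ex1L *ᵥ uL t) - uR t ⬝ᵥ (ExNR *ᵥ uR t))
          - (lamEta / 2) * (uL t ⬝ᵥ ((EyNL - Ey1L) *ᵥ uL t)
              + uR t ⬝ᵥ ((EyNR - Ey1R) *ᵥ uR t))
          - (σ * |lam| / 2) *
              ((RL *ᵥ uL t - RR *ᵥ uR t) ⬝ᵥ (MΓ *ᵥ (RL *ᵥ uL t - RR *ᵥ uR t))))
      ∧ (-((σ * |lam| / 2) *
            ((RL *ᵥ uL t - RR *ᵥ uR t) ⬝ᵥ (MΓ *ᵥ (RL *ᵥ uL t - RR *ᵥ uR t)))) ≤ 0)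
      ∧ (σ = 0 →
          (σ * |lam| / 2) *
            ((RL *ᵥ uL t - RR *ᵥ uR t) ⬝ᵥ (MΓ *ᵥ (RL *ᵥ uL t - RR *ᵥ uR t))) = 0) :=
  nonconforming_energy_stability_general HxL HyL HxR HyR QxL QyL QxR QyR hHxLd hHyLd hHxRd hHyRd
    hQxL hQyL hQxR hQyR MΓ hMΓ HL QξL hQξL QηL hQηL ExNL hExNL Ex1L hEx1L EyNL hEyNL Ey1L hEy1L HR
    QξR hQξR QηR hQηR ExNR hExNR Ex1R hEx1R EyNR hEyNR Ey1R hEy1R RL RR lam lamEta σ JL JR hσ uL uL'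
    uR uR' fL fR hfL hfR hschemeL hschemeR
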